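/- The following are equivalent: (1) the Jacobi operator J is essentially self-adjoint; (2) Σ_{k=0}^∞ |p_k(z)|² = ∞ for every z ∈ ℂ ∖ ℝ; (3) Σ_{k=0}^∞ |p_k(z)|² = ∞ for some z ∈ ℂ ∖ ℝ. -/

import Mathlib

open MeasureTheory Polynomial

noncomputable section

instance : Fact ((1 : ENNReal) ≤ 2) := ⟨one_le_two⟩

/-- The Hilbert space `ℓ²(ℤ≥0)`. -/
abbrev JacobiH : Type := lp (fun _ : ℕ => ℂ) 2

/-- The submodule of finitely supported elements of `ℓ²(ℤ≥0)`. -/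
def finSupp : Submodule ℂ JacobiH where
  carrier := {f | (Function.support (f : ℕ → ℂ)).Finite}
  zero_mem' := by
    have : Function.support ((0 : JacobiH) : ℕ → ℂ) = ∅ := by
      ext x; exact ⟨fun h => h rfl, fun h => h.elim⟩
    exact Set.finite_empty.subset this.subset
  add_mem' := by
    intro f g hf hg
    refine (hf.union hg).subset fun x hx => ?_
    by_contra hc
    simp only [Set.mem_union, Function.mem_support, not_or, not_not] at hc
    exact hx (by simp only [Function.mem_support, not_not, lp.coeFn_add, Pi.add_apply,
      hc.1, hc.2, add_zero])
  smul_mem' := by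
    intro c f hf
    refine hf.subset fun x hx => ?_
    by_contra hc
    simp only [Function.mem_support, not_not] at hc
    exact hx (by simp only [Function.mem_support, not_not, lp.coeFn_smul, Pi.smul_apply,
      hc, smul_zero])

/-- The formal Jacobi (tridiagonal) expression with coefficients `a`, `b`, using the
conventions `a_{-1} = 0`, `v_{-1} = 0`. -/
def jacobiApply (a b : ℕ → ℝ) (v : ℕ → ℂ) : ℕ → ℂ
  | 0 => (a 0 : ℂ) * v 1 + (b 0 : ℂ) * v 0
  | (k + 1) => (a (k + 1) : ℂ) * v (k + 2) + (b (k + 1) : ℂ) * v (k + 1) + (a k : ℂ) * v k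

/-!
The adjoint `J†` acts on its domain by the Jacobi expression, and the solutions of `J u = z u`
are the multiples of `(p_k(z))_k`, so `z` is an eigenvalue of `J†` iff `(p_k(z))_k ∈ ℓ²`.

If `J†† = J†`, then `J†` is symmetric and has no nonreal eigenvalue. Conversely, let `z` be
nonreal with `ker (J† - z) = ker (J† - z̄) = 0`. The range of `J†† - z` is closed, because `J††`
is closed and `‖(S - z) v‖ ≥ |Im z| ‖v‖` for symmetric `S`, and it is dense, because its
orthogonal complement lies in `ker (J† - z̄)`. Hence every `u ∈ dom J†` differs from a point of
`dom J††` by an element of `ker (J† - z) = 0`. As the `p_k` have real coefficients, `(p_k(z))_k`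
and `(p_k(z̄))_k` are square-summable together, so a single nonreal `z` decides the question.
-/

open scoped ComplexConjugate InnerProductSpace
open Finset LinearPMap

namespace LinearPMap

def HasEigenvalue {R E : Type*} [Ring R] [AddCommGroup E] [Module R E] (T : E →ₗ.[R] E)
    (z : R) : Prop :=
  ∃ u : T.domain, (u : E) ≠ 0 ∧ T u = z • (u : E)

section RCLike

variable {𝕜 E F : Type*} [RCLike 𝕜] [NormedAddCommGroup E] [InnerProductSpace 𝕜 E]
  [NormedAddCommGroup F] [InnerProductSpace 𝕜 F]

theorem IsFormalAdjoint.mono {T T' : E →ₗ.[𝕜] F} {S S' : F →ₗ.[𝕜] E}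
    (h : T.IsFormalAdjoint S) (hT : T' ≤ T) (hS : S' ≤ S) : T'.IsFormalAdjoint S' := fun x y => by
  rw [apply_comp_inclusion hT, apply_comp_inclusion hS]
  exact h (Submodule.inclusion hT.1 x) (Submodule.inclusion hS.1 y)

variable [CompleteSpace E]

theorem adjoint_le_adjoint {S T : E →ₗ.[𝕜] F} (hS : Dense (S.domain : Set E)) (h : S ≤ T) :
    T† ≤ S† := by
  have key : ∀ (y : T†.domain) (x : S.domain), ⟪T† y, (x : E)⟫_𝕜 = ⟪(y : F), S x⟫_𝕜 := by
    intro y x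
    rw [apply_comp_inclusion h]
    exact adjoint_isFormalAdjoint (hS.mono h.1) y (Submodule.inclusion h.1 x)
  refine ⟨fun y hy => mem_adjoint_domain_of_exists y ⟨_, key ⟨y, hy⟩⟩, fun y y' hyy' => ?_⟩
  exact (adjoint_apply_eq hS y' (hyy' ▸ key y)).symm

theorem IsFormalAdjoint.dense_adjoint_domain {T : E →ₗ.[𝕜] E} (hT : Dense (T.domain : Set E))
    (hsym : T.IsFormalAdjoint T) : Dense (T†.domain : Set E) :=
  hT.mono (hsym.le_adjoint hT).1

end RCLike

variable {E : Type*} [NormedAddCommGroup E] [InnerProductSpace ℂ E]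

theorem IsFormalAdjoint.abs_im_mul_norm_le {S : E →ₗ.[ℂ] E} (hS : S.IsFormalAdjoint S) (z : ℂ)
    (v : S.domain) : |z.im| * ‖(v : E)‖ ≤ ‖S v - z • (v : E)‖ := by
  have hreal : (⟪(v : E), S v⟫_ℂ).im = 0 :=
    Complex.conj_eq_iff_im.1 (by rw [inner_conj_symm, hS v v])
  have him : (⟪(v : E), S v - z • (v : E)⟫_ℂ).im = -(z.im * ‖(v : E)‖ ^ 2) := by
    rw [inner_sub_right, inner_smul_right, inner_self_eq_norm_sq_to_K, Complex.sub_im, hreal]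
    simp [Complex.mul_im, ← Complex.ofReal_pow]
  have key : ‖(v : E)‖ * (|z.im| * ‖(v : E)‖) ≤ ‖(v : E)‖ * ‖S v - z • (v : E)‖ :=
    calc ‖(v : E)‖ * (|z.im| * ‖(v : E)‖) = |(⟪(v : E), S v - z • (v : E)⟫_ℂ).im| := by
          rw [him, abs_neg, abs_mul, abs_of_nonneg (sq_nonneg ‖(v : E)‖)]; ring
      _ ≤ ‖⟪(v : E), S v - z • (v : E)⟫_ℂ‖ := Complex.abs_im_le_norm _
      _ ≤ ‖(v : E)‖ * ‖S v - z • (v : E)‖ := norm_inner_le_norm _ _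
  rcases (norm_nonneg (v : E)).eq_or_lt with hv | hv
  · rw [← hv, mul_zero]; exact norm_nonneg _
  · exact le_of_mul_le_mul_left key hv

theorem IsFormalAdjoint.not_hasEigenvalue {S : E →ₗ.[ℂ] E} (hS : S.IsFormalAdjoint S) {z : ℂ}
    (hz : z.im ≠ 0) : ¬ S.HasEigenvalue z := by
  rintro ⟨u, hu, hSu⟩
  have := hS.abs_im_mul_norm_le z u
  rw [hSu, sub_self, norm_zero] at this
  exact hu (norm_eq_zero.1 (le_antisymm
    (nonpos_of_mul_nonpos_right this (abs_pos.2 hz)) (norm_nonneg _)))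

open Filter Topology in
theorem IsFormalAdjoint.isClosed_range_sub_smul [CompleteSpace E] {S : E →ₗ.[ℂ] E}
    (hS : S.IsFormalAdjoint S) (hcl : S.IsClosed) {z : ℂ} (hz : z.im ≠ 0) :
    _root_.IsClosed (LinearMap.range (S.toFun - z • S.domain.subtype) : Set E) := by
  refine isSeqClosed_iff_isClosed.1 fun y w hy hlim => ?_
  choose v hv using hy
  have hv' : ∀ n, S (v n) = y n + z • (v n : E) := fun n => by
    rw [← hv n]; simp
  have hcauchy : CauchySeq fun n => (v n : E) := by
    rw [Metric.cauchySeq_iff]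
    intro ε hε
    obtain ⟨N, hN⟩ := Metric.cauchySeq_iff.1 hlim.cauchySeq (|z.im| * ε)
      (mul_pos (abs_pos.2 hz) hε)
    refine ⟨N, fun m hm n hn => lt_of_mul_lt_mul_left ?_ (abs_nonneg z.im)⟩
    calc |z.im| * dist (v m : E) (v n) ≤ dist (y m) (y n) := by
          simpa [dist_eq_norm, ← hv, smul_sub, sub_sub_sub_comm, LinearPMap.map_sub] using
            hS.abs_im_mul_norm_le z (v m - v n)
      _ < |z.im| * ε := hN m hm n hn
  obtain ⟨x, hx⟩ := cauchySeq_tendsto_of_complete hcauchy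
  have hSx : Tendsto (fun n => S (v n)) atTop (𝓝 (w + z • x)) := by
    simpa only [hv'] using hlim.add (hx.const_smul z)
  obtain ⟨x', hx', hSx'⟩ := (S.mem_graph_iff).1 <|
    hcl.mem_of_tendsto (hx.prodMk_nhds hSx) (Eventually.of_forall fun n => S.mem_graph (v n))
  exact ⟨x', by simp_all⟩

variable [CompleteSpace E]

theorem dense_range_sub_smul {T : E →ₗ.[ℂ] E} (hT : Dense (T.domain : Set E)) {z : ℂ}
    (h : ¬ T†.HasEigenvalue (conj z)) :
    Dense (LinearMap.range (T.toFun - z • T.domain.subtype) : Set E) := by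
  rw [Submodule.dense_iff_topologicalClosure_eq_top, Submodule.topologicalClosure_eq_top_iff,
    Submodule.eq_bot_iff]
  intro w hw
  have key : ∀ x : T.domain, ⟪conj z • w, (x : E)⟫_ℂ = ⟪w, T x⟫_ℂ := by
    intro x
    have := (Submodule.mem_orthogonal' _ w).1 hw _ (LinearMap.mem_range_self _ x)
    simp only [LinearMap.sub_apply, LinearMap.smul_apply, Submodule.subtype_apply,
      inner_sub_right, inner_smul_right, sub_eq_zero] at this
    rw [inner_smul_left, Complex.conj_conj, ← this]
    rfl
  by_contra hw0
  exact h ⟨⟨w, mem_adjoint_domain_of_exists w ⟨_, key⟩⟩, hw0, adjoint_apply_eq hT _ key⟩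

theorem adjoint_adjoint_eq_adjoint_of_not_hasEigenvalue {T : E →ₗ.[ℂ] E}
    (hT : Dense (T.domain : Set E)) (hsym : T.IsFormalAdjoint T) {z : ℂ} (hz : z.im ≠ 0)
    (h : ¬ T†.HasEigenvalue z) (h' : ¬ T†.HasEigenvalue (conj z)) : T†† = T† := by
  have hdense := hsym.dense_adjoint_domain hT
  have hle : T†† ≤ T† := adjoint_le_adjoint hT (hsym.le_adjoint hT)
  have hle' : T ≤ T†† := (adjoint_isFormalAdjoint hT).le_adjoint hdense
  have hS : T††.IsFormalAdjoint T†† := (adjoint_isFormalAdjoint hdense).mono le_rfl hle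
  have hrange : LinearMap.range (T††.toFun - z • T††.domain.subtype) = ⊤ := by
    rw [← (hS.isClosed_range_sub_smul (adjoint_isClosed hdense) hz).submodule_topologicalClosure_eq,
      ← Submodule.dense_iff_topologicalClosure_eq_top]
    refine (dense_range_sub_smul hT h').mono ?_
    rintro _ ⟨x, rfl⟩
    exact ⟨Submodule.inclusion hle'.1 x, by simp [apply_comp_inclusion hle']⟩
  refine eq_of_le_of_domain_eq hle (le_antisymm hle.1 fun u hu => ?_)
  obtain ⟨w, hw⟩ : T† ⟨u, hu⟩ - z • u ∈ LinearMap.range (T††.toFun - z • T††.domain.subtype) :=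
    hrange ▸ Submodule.mem_top
  have hdiff : (⟨u, hu⟩ - Submodule.inclusion hle.1 w : T†.domain) = 0 := by
    by_contra hne
    refine h ⟨_, fun h0 => hne (Subtype.ext h0), ?_⟩
    have hw' : T†† w - z • (w : E) = T† ⟨u, hu⟩ - z • u := hw
    rw [LinearPMap.map_sub, ← apply_comp_inclusion hle, Submodule.coe_sub,
      Submodule.coe_inclusion]
    linear_combination (norm := module) -hw'
  rw [sub_eq_zero] at hdiff
  rw [show u = w from congrArg Subtype.val hdiff]
  exact w.2

theorem not_hasEigenvalue_adjoint_of_adjoint_adjoint_eq {T : E →ₗ.[ℂ] E}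
    (hT : Dense (T.domain : Set E)) (hsym : T.IsFormalAdjoint T) (h : T†† = T†) {z : ℂ}
    (hz : z.im ≠ 0) : ¬ T†.HasEigenvalue z :=
  (h ▸ adjoint_isFormalAdjoint (hsym.dense_adjoint_domain hT)).not_hasEigenvalue hz

end LinearPMap

theorem memℓp_two_iff_summable_sq_norm {α : Type*} {E : α → Type*}
    [∀ i, NormedAddCommGroup (E i)] (f : ∀ i, E i) :
    Memℓp f 2 ↔ Summable fun i => ‖f i‖ ^ 2 := by
  rw [memℓp_gen_iff (by norm_num)]
  norm_num

theorem summable_sq_norm_aeval_conj_iff {ι : Type*} (p : ι → ℝ[X]) (z : ℂ) :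
    Summable (fun k => ‖aeval (conj z) (p k)‖ ^ 2) ↔
      Summable (fun k => ‖aeval z (p k)‖ ^ 2) := by
  simp only [aeval_conj, RCLike.norm_conj]

theorem exists_eq_zero_of_mem_finSupp {v : JacobiH} (hv : v ∈ finSupp) :
    ∃ N, ∀ k, N ≤ k → (v : ℕ → ℂ) k = 0 := by
  obtain ⟨N, hN⟩ := Set.Finite.bddAbove (s := Function.support (v : ℕ → ℂ)) hv
  exact ⟨N + 1, fun k hk => Function.notMem_support.1 fun hk' => by have := hN hk'; omega⟩

theorem finSupp_dense : Dense (finSupp : Set JacobiH) := by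
  intro f
  refine mem_closure_of_tendsto (lp.hasSum_single (by norm_num) f) (Filter.Eventually.of_forall
    fun s => s.finite_toSet.subset fun j hj => ?_)
  by_contra hjs
  refine hj ?_
  rw [lp.coeFn_sum, Finset.sum_apply]
  exact Finset.sum_eq_zero fun i hi => lp.single_apply_ne 2 i _ (fun hji => hjs (hji ▸ hi))

theorem jacobiApply_eq_zero {a b : ℕ → ℝ} {v : ℕ → ℂ} {N : ℕ} (hv : ∀ k, N ≤ k → v k = 0) :
    ∀ k, N + 1 ≤ k → jacobiApply a b v k = 0
  | k + 1, hk => by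
    simp [jacobiApply, hv k (by omega), hv (k + 1) (by omega), hv (k + 2) (by omega)]

theorem sum_range_conj_jacobiApply_mul_sub (a b : ℕ → ℝ) (u v : ℕ → ℂ) (M : ℕ) :
    ∑ k ∈ range (M + 1), (conj (jacobiApply a b u k) * v k - conj (u k) * jacobiApply a b v k) =
      a M * (conj (u (M + 1)) * v M - conj (u M) * v (M + 1)) := by
  induction M with
  | zero => simp [jacobiApply]; ring
  | succ M ih =>
    rw [sum_range_succ, ih]
    simp [jacobiApply]
    ring

theorem tsum_conj_jacobiApply_mul (a b : ℕ → ℝ) (u : ℕ → ℂ) {v : ℕ → ℂ} {N : ℕ}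
    (hv : ∀ k, N ≤ k → v k = 0) :
    ∑' k, conj (jacobiApply a b u k) * v k = ∑' k, conj (u k) * jacobiApply a b v k := by
  have hout : ∀ k ∉ range (N + 1), v k = 0 ∧ jacobiApply a b v k = 0 := fun k hk => by
    rw [mem_range, not_lt] at hk
    exact ⟨hv k (by omega), jacobiApply_eq_zero hv k hk⟩
  rw [tsum_eq_sum fun k hk => by rw [(hout k hk).1, mul_zero],
    tsum_eq_sum fun k hk => by rw [(hout k hk).2, mul_zero], ← sub_eq_zero, ← sum_sub_distrib,
    sum_range_conj_jacobiApply_mul_sub, hv N le_rfl, hv (N + 1) (by omega)]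
  ring

theorem lp_inner_eq_tsum {ι : Type*} (f g : lp (fun _ : ι => ℂ) 2) :
    ⟪f, g⟫_ℂ = ∑' k, conj ((f : ι → ℂ) k) * (g : ι → ℂ) k := by
  simp only [lp.inner_eq_tsum, RCLike.inner_apply']

structure IsJacobiOperator (a b : ℕ → ℝ) (J : JacobiH →ₗ.[ℂ] JacobiH) : Prop where
  domain_eq : J.domain = finSupp
  apply_apply : ∀ (v : J.domain) (k : ℕ),
    (J v : ℕ → ℂ) k = jacobiApply a b ((v : JacobiH) : ℕ → ℂ) k

namespace IsJacobiOperator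

variable {a b : ℕ → ℝ} {J : JacobiH →ₗ.[ℂ] JacobiH}

theorem dense_domain (hJ : IsJacobiOperator a b J) : Dense (J.domain : Set JacobiH) := by
  rw [hJ.domain_eq]; exact finSupp_dense

theorem inner_eq_inner_apply (hJ : IsJacobiOperator a b J) {u w : JacobiH}
    (hw : ∀ k, (w : ℕ → ℂ) k = jacobiApply a b (u : ℕ → ℂ) k) (v : J.domain) :
    ⟪w, (v : JacobiH)⟫_ℂ = ⟪u, J v⟫_ℂ := by
  obtain ⟨N, hN⟩ := exists_eq_zero_of_mem_finSupp (hJ.domain_eq ▸ v.2 : (v : JacobiH) ∈ finSupp)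
  simp only [lp_inner_eq_tsum, hw, hJ.apply_apply]
  exact tsum_conj_jacobiApply_mul a b _ hN

theorem isFormalAdjoint (hJ : IsJacobiOperator a b J) : J.IsFormalAdjoint J :=
  fun x => hJ.inner_eq_inner_apply (hJ.apply_apply x)

theorem exists_mem_adjoint_domain (hJ : IsJacobiOperator a b J) {u w : JacobiH}
    (hw : ∀ k, (w : ℕ → ℂ) k = jacobiApply a b (u : ℕ → ℂ) k) :
    ∃ hu : u ∈ J†.domain, J† ⟨u, hu⟩ = w :=
  ⟨mem_adjoint_domain_of_exists u ⟨w, hJ.inner_eq_inner_apply hw⟩,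
    adjoint_apply_eq hJ.dense_domain _ (hJ.inner_eq_inner_apply hw)⟩

theorem adjoint_apply_apply (hJ : IsJacobiOperator a b J) (u : J†.domain) (n : ℕ) :
    (J† u : ℕ → ℂ) n = jacobiApply a b ((u : JacobiH) : ℕ → ℂ) n := by
  have hn : lp.single 2 n (1 : ℂ) ∈ J.domain := by
    rw [hJ.domain_eq]
    exact (Set.finite_singleton n).subset fun j hj => by
      by_contra hjn
      exact hj (lp.single_apply_ne 2 n _ hjn)
  have h := adjoint_isFormalAdjoint hJ.dense_domain u ⟨_, hn⟩
  rw [lp.inner_single_right, lp_inner_eq_tsum] at h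
  simp only [hJ.apply_apply] at h
  rw [← tsum_conj_jacobiApply_mul a b _ (N := n + 1)
      fun k hk => lp.single_apply_ne 2 n _ (by omega),
    tsum_eq_single n fun k hk => by rw [lp.single_apply_ne 2 n _ hk, mul_zero],
    lp.single_apply_self, mul_one, RCLike.inner_apply, one_mul] at h
  exact star_injective h

end IsJacobiOperator

structure IsJacobiPolynomials (a b : ℕ → ℝ) (p : ℕ → ℝ[X]) : Prop where
  zero : p 0 = 1
  one : C (a 0) * p 1 = X - C (b 0)
  succ : ∀ k, X * p (k + 1) =
    C (a (k + 1)) * p (k + 2) + C (b (k + 1)) * p (k + 1) + C (a k) * p k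

theorem IsJacobiPolynomials.jacobiApply_aeval {a b : ℕ → ℝ} {p : ℕ → ℝ[X]}
    (hp : IsJacobiPolynomials a b p) (z : ℂ) (k : ℕ) :
    jacobiApply a b (fun k => aeval z (p k)) k = z * aeval z (p k) := by
  cases k with
  | zero =>
    have h1 := congrArg (aeval z) hp.one
    simp only [_root_.map_mul, aeval_C, _root_.map_sub, aeval_X, Complex.coe_algebraMap] at h1
    simp only [jacobiApply, hp.zero, map_one]
    linear_combination h1
  | succ k =>
    have h := congrArg (aeval z) (hp.succ k)
    simp only [_root_.map_add, _root_.map_mul, aeval_X, aeval_C, Complex.coe_algebraMap] at h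
    simp only [jacobiApply]
    linear_combination -h

theorem eq_zero_of_jacobiApply_eq_mul {a b : ℕ → ℝ} (ha : ∀ k, a k ≠ 0) {z : ℂ} {u : ℕ → ℂ}
    (h : ∀ k, jacobiApply a b u k = z * u k) (h0 : u 0 = 0) : u = 0 := by
  have hpair : ∀ k, u k = 0 ∧ u (k + 1) = 0 := by
    intro k
    induction k with
    | zero =>
      have := h 0
      simp only [jacobiApply, h0, mul_zero, add_zero] at this
      exact ⟨h0, (mul_eq_zero.1 this).resolve_left (by exact_mod_cast ha 0)⟩
    | succ k ih =>
      have := h (k + 1)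
      simp only [jacobiApply, ih.1, ih.2, mul_zero, add_zero] at this
      exact ⟨ih.2, (mul_eq_zero.1 this).resolve_left (by exact_mod_cast ha (k + 1))⟩
  exact funext fun k => (hpair k).1

theorem IsJacobiPolynomials.eq_mul_aeval {a b : ℕ → ℝ} (ha : ∀ k, a k ≠ 0) {p : ℕ → ℝ[X]}
    (hp : IsJacobiPolynomials a b p) {z : ℂ} {u : ℕ → ℂ}
    (h : ∀ k, jacobiApply a b u k = z * u k) (k : ℕ) : u k = u 0 * aeval z (p k) := by
  have hsol : ∀ k, jacobiApply a b (fun k => u k - u 0 * aeval z (p k)) k =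
      z * (u k - u 0 * aeval z (p k)) := fun k => by
    have hu := h k
    have hP := hp.jacobiApply_aeval z k
    cases k <;> simp only [jacobiApply] at hu hP ⊢ <;> linear_combination hu - u 0 * hP
  have := eq_zero_of_jacobiApply_eq_mul ha hsol (by simp [hp.zero])
  exact sub_eq_zero.1 (congrFun this k)

theorem IsJacobiOperator.adjoint_hasEigenvalue_iff {a b : ℕ → ℝ} {J : JacobiH →ₗ.[ℂ] JacobiH}
    (hJ : IsJacobiOperator a b J) (ha : ∀ k, a k ≠ 0) {p : ℕ → ℝ[X]}
    (hp : IsJacobiPolynomials a b p) (z : ℂ) :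
    J†.HasEigenvalue z ↔ Summable fun k => ‖aeval z (p k)‖ ^ 2 := by
  constructor
  · rintro ⟨u, hu0, hu⟩
    have hrep := hp.eq_mul_aeval ha fun k => by rw [← hJ.adjoint_apply_apply u k, hu]; rfl
    have h0 : ((u : JacobiH) : ℕ → ℂ) 0 ≠ 0 := fun h0 =>
      hu0 (lp.ext (funext fun k => by rw [hrep k, h0, zero_mul]; rfl))
    have hsum := (memℓp_two_iff_summable_sq_norm _).1 (lp.memℓp (u : JacobiH))
    refine (hsum.mul_left (‖((u : JacobiH) : ℕ → ℂ) 0‖ ^ 2)⁻¹).congr fun k => ?_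
    rw [hrep k, norm_mul, mul_pow, inv_mul_cancel_left₀ (by positivity)]
  · intro hS
    let P : JacobiH := ⟨fun k => aeval z (p k), (memℓp_two_iff_summable_sq_norm _).2 hS⟩
    obtain ⟨hP, hJP⟩ := hJ.exists_mem_adjoint_domain (u := P) (w := z • P)
      fun k => (hp.jacobiApply_aeval z k).symm
    refine ⟨⟨P, hP⟩, fun h => ?_, hJP⟩
    have := congrArg (fun f : JacobiH => (f : ℕ → ℂ) 0) h
    simp [P, hp.zero] at this

/-- The Jacobi operator `J` (with domain the finitely supported sequences) is essentially
self-adjoint (`J** = J*`) if and only if `Σ_k |p_k(z)|² = ∞` for every `z ∈ ℂ \ ℝ`, if and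
only if `Σ_k |p_k(z)|² = ∞` for some `z ∈ ℂ \ ℝ`, where `(p_k)` are the polynomials generated
by the three-term recurrence with coefficients `(a_k, b_k)`. -/
theorem essentially_selfAdjoint_iff_divergence (a b : ℕ → ℝ) (hapos : ∀ k, 0 < a k)
    (p : ℕ → Polynomial ℝ)
    (hp0 : p 0 = 1) (hp1 : C (a 0) * p 1 = X - C (b 0))
    (hrec : ∀ k : ℕ, X * p (k + 1) =
      C (a (k + 1)) * p (k + 2) + C (b (k + 1)) * p (k + 1) + C (a k) * p k)
    (J : JacobiH →ₗ.[ℂ] JacobiH) (hdom : J.domain = finSupp)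
    (hact : ∀ (v : J.domain) (k : ℕ),
      (J v : ℕ → ℂ) k = jacobiApply a b ((v : JacobiH) : ℕ → ℂ) k) :
    (J.adjoint.adjoint = J.adjoint ↔
      ∀ z : ℂ, z.im ≠ 0 → ¬ Summable (fun k : ℕ => ‖Polynomial.aeval z (p k)‖ ^ 2)) ∧
    (J.adjoint.adjoint = J.adjoint ↔
      ∃ z : ℂ, z.im ≠ 0 ∧ ¬ Summable (fun k : ℕ => ‖Polynomial.aeval z (p k)‖ ^ 2)) := by
  have hJ : IsJacobiOperator a b J := ⟨hdom, hact⟩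
  have eigen_iff := hJ.adjoint_hasEigenvalue_iff (fun k => (hapos k).ne') ⟨hp0, hp1, hrec⟩
  have divergent_of_eq (h : J†† = J†) (z : ℂ) (hz : z.im ≠ 0) :
      ¬ Summable fun k => ‖aeval z (p k)‖ ^ 2 := by
    rw [← eigen_iff]
    exact not_hasEigenvalue_adjoint_of_adjoint_adjoint_eq hJ.dense_domain hJ.isFormalAdjoint h hz
  have eq_of_divergent (z : ℂ) (hz : z.im ≠ 0) (hS : ¬ Summable fun k => ‖aeval z (p k)‖ ^ 2) :
      J†† = J† :=
    adjoint_adjoint_eq_adjoint_of_not_hasEigenvalue hJ.dense_domain hJ.isFormalAdjoint hz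
      (by rwa [eigen_iff]) (by rwa [eigen_iff, summable_sq_norm_aeval_conj_iff])
  exact ⟨⟨divergent_of_eq, fun h => eq_of_divergent _ (by simp) (h Complex.I (by simp))⟩,
    ⟨fun h => ⟨Complex.I, by simp, divergent_of_eq h _ (by simp)⟩,
      fun ⟨z, hz, hS⟩ => eq_of_divergent z hz hS⟩⟩
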